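/- In an extreme even individual purpose game with c_1 = 0, c_K = g, any profile D in which every agent contributes 0 to goals other than its own and some agent i contributes d_{ii} < g to its own goal is not a Nash equilibrium (agent i improves by deviating to contribute g to goal i). -/

import Mathlib

/-!
Agent `i` is the only contributor to goal `i` and contributes nothing elsewhere. Raising
`d_ii` to `g` therefore leaves every other column sum unchanged and completes goal `i`:
the extra cost `g - d_ii ≤ g` is outweighed by the reward `w_ii > g`.
-/

open Finset

/-- Heaviside step: `Θ x = 1` if `x ≥ 0`, else `0`. -/
noncomputable def theta (x : ℝ) : ℝ := if 0 ≤ x then 1 else 0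

/-- Utility of agent `i` in a multi-goal achievement game with motivation
matrix `w`, goal thresholds `g` and contribution matrix `D`:
`u_i(D) = -Σ_j d_{ij} + Σ_j w_{ij}·Θ(Σ_k d_{kj} - g_j)`. -/
noncomputable def util {N M : ℕ} (w : Fin N → Fin M → ℝ) (g : Fin M → ℝ)
    (D : Fin N → Fin M → ℝ) (i : Fin N) : ℝ :=
  -(∑ j, D i j) + ∑ j, w i j * theta ((∑ k, D k j) - g j)

/-- `D` is a pure-strategy Nash equilibrium of the `N`-agent, `N`-goal
achievement game with cost set `C`, motivation matrix `w` and common goal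
threshold `g`: all contributions lie in `C`, and no agent can strictly
increase its utility by unilaterally changing its own row to another row with
entries in `C`. -/
noncomputable def IsNash {N : ℕ} (C : Set ℝ) (w : Fin N → Fin N → ℝ) (g : ℝ)
    (D : Fin N → Fin N → ℝ) : Prop :=
  (∀ k l, D k l ∈ C) ∧
  ∀ i : Fin N, ∀ r : Fin N → ℝ, (∀ j, r j ∈ C) →
    util w (fun _ => g) (Function.update D i r) i ≤ util w (fun _ => g) D i

theorem Finset.sum_update_eq_sub_add {ι G : Type*} [Fintype ι] [DecidableEq ι] [AddCommGroup G]
    (f : ι → G) (k : ι) (b : G) : ∑ x, Function.update f k b x = ∑ x, f x - f k + b := by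
  rw [sum_update_of_mem (mem_univ k), sum_eq_add_sum_sdiff_singleton_of_mem (mem_univ k) f]
  abel

theorem theta_of_nonneg {x : ℝ} (hx : 0 ≤ x) : theta x = 1 := if_pos hx

theorem theta_of_neg {x : ℝ} (hx : x < 0) : theta x = 0 := if_neg hx.not_ge

theorem sum_update_row_apply {N M : ℕ} (D : Fin N → Fin M → ℝ) (i : Fin N) (k : Fin M)
    (b : ℝ) (j : Fin M) :
    ∑ l, Function.update D i (Function.update (D i) k b) l j =
      Function.update (fun j => ∑ l, D l j) k (∑ l, D l k - D i k + b) j := by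
  have hentry : ∀ l, Function.update D i (Function.update (D i) k b) l j =
      Function.update (fun l => D l j) i (Function.update (D i) k b j) l :=
    Function.apply_update (fun _ row => row j) D i _
  simp only [hentry, sum_update_eq_sub_add]
  rcases eq_or_ne j k with rfl | hjk
  · simp
  · simp [hjk]

theorem util_update_row_single {N M : ℕ} (w : Fin N → Fin M → ℝ) (g : Fin M → ℝ)
    (D : Fin N → Fin M → ℝ) (i : Fin N) (k : Fin M) (b : ℝ) :
    util w g (Function.update D i (Function.update (D i) k b)) i =
      util w g D i + (D i k - b) +
        w i k * (theta (∑ l, D l k - D i k + b - g k) - theta (∑ l, D l k - g k)) := by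
  have hgoals : (fun j => w i j *
      theta (Function.update (fun j => ∑ l, D l j) k (∑ l, D l k - D i k + b) j - g j)) =
      Function.update (fun j => w i j * theta (∑ l, D l j - g j)) k
        (w i k * theta (∑ l, D l k - D i k + b - g k)) :=
    funext (Function.apply_update (fun j c => w i j * theta (c - g j)) _ k _)
  simp only [util, Function.update_self, sum_update_row_apply, sum_update_eq_sub_add, hgoals]
  ring

theorem not_isNash_of_util_lt {N : ℕ} {C : Set ℝ} {w : Fin N → Fin N → ℝ} {g : ℝ}
    {D : Fin N → Fin N → ℝ} {i : Fin N} {r : Fin N → ℝ} (hrC : ∀ j, r j ∈ C)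
    (hlt : util w (fun _ => g) D i < util w (fun _ => g) (Function.update D i r) i) :
    ¬ IsNash C w g D :=
  fun hD => (hD.2 i r hrC).not_gt hlt

theorem underinvestment_not_nash_general {N : ℕ} (C : Set ℝ) (g : ℝ)
    (h0C : (0:ℝ) ∈ C) (hgC : g ∈ C)
    (hCpos : ∀ x ∈ C, 0 ≤ x)
    (w : Fin N → Fin N → ℝ)
    (hwii : ∀ i, g < w i i)
    (D : Fin N → Fin N → ℝ) (hDC : ∀ k l, D k l ∈ C)
    (hD0 : ∀ k j, k ≠ j → D k j = 0)
    (i : Fin N) (hii : D i i < g) :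
    util w (fun _ => g) D i <
      util w (fun _ => g)
        (Function.update D i (fun j => if j = i then g else 0)) i ∧
    ¬ IsNash C w g D := by
  have hrow : (fun j => if j = i then g else 0) = Function.update (D i) i g := by
    ext j
    rcases eq_or_ne j i with rfl | hji
    · simp
    · simp [hji, hD0 i j hji.symm]
  have hcol : ∑ l, D l i = D i i := sum_eq_single i (fun l _ hli => hD0 l i hli) (by simp)
  have hlt : util w (fun _ => g) D i <
      util w (fun _ => g) (Function.update D i (fun j => if j = i then g else 0)) i := by
    rw [hrow, util_update_row_single, hcol, sub_self, zero_add, sub_self,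
      theta_of_nonneg le_rfl, theta_of_neg (sub_neg.2 hii)]
    linarith [hwii i, hCpos _ (hDC i i)]
  refine ⟨hlt, not_isNash_of_util_lt (fun j => ?_) hlt⟩
  split_ifs
  exacts [hgC, h0C]

/-- In an extreme even individual purpose game, any profile in which every
agent contributes `0` to goals other than its own and some agent `i`
contributes less than `g` to its own goal is not a Nash equilibrium: agent `i`
strictly improves by deviating to contribute `g` to goal `i`. -/
theorem underinvestment_not_nash {N : ℕ} (C : Set ℝ) (g : ℝ)
    (hg : 0 < g) (h0C : (0:ℝ) ∈ C) (hgC : g ∈ C)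
    (hCpos : ∀ x ∈ C, 0 ≤ x)
    (w : Fin N → Fin N → ℝ)
    (hwii : ∀ i, g < w i i)
    (hwij : ∀ i j, 0 ≤ w i j)
    (D : Fin N → Fin N → ℝ) (hDC : ∀ k l, D k l ∈ C)
    (hD0 : ∀ k j, k ≠ j → D k j = 0)
    (i : Fin N) (hii : D i i < g) :
    util w (fun _ => g) D i <
      util w (fun _ => g)
        (Function.update D i (fun j => if j = i then g else 0)) i ∧
    ¬ IsNash C w g D :=
  underinvestment_not_nash_general C g h0C hgC hCpos w hwii D hDC hD0 i hii
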